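/- Let k ≥ 3 be an integer, let 0 < γ < 1, and let r = ⌈(10/γ²)·k·ln k⌉. Then for every i = 1, 2, …, k, if ≪ is a linear order on the vertices of T^r_i chosen uniformly at random, the probability that the First-Fit coloring of T^r_i in order ≪ assigns to the root of T^r_i a color strictly smaller than i is at most iγ/k. -/

import Mathlib

noncomputable def ffAux {V : Type*} (G : SimpleGraph V) (ord : V → ℕ) (t : ℕ) (v : V) : ℕ :=
  sInf {i : ℕ | 0 < i ∧ ∀ u, G.Adj u v → ∀ h : ord u < t, ffAux G ord (ord u) u ≠ i}
termination_by t
decreasing_by exact h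

/-- The color that First-Fit assigns to vertex `v` when coloring `G` in the
presentation order in which `u` comes before `w` iff `ord u < ord w`. -/
noncomputable def ffColor {V : Type*} (G : SimpleGraph V) (ord : V → ℕ) (v : V) : ℕ :=
  ffAux G ord (ord v) v

/-- The number of colors used by First-Fit on `G` in the order given by `ord`. -/
noncomputable def ffNumColors {V : Type*} [Fintype V] (G : SimpleGraph V) (ord : V → ℕ) : ℕ :=
  (Finset.univ.image (ffColor G ord)).card

/-- Expected number of colors used by First-Fit on `G` in a uniformly random order. -/
noncomputable def ffExpect {V : Type*} [Fintype V] (G : SimpleGraph V) : ℝ :=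
  letI := Classical.decEq V
  (∑ e : V ≃ Fin (Fintype.card V), (ffNumColors G (fun v => (e v : ℕ)) : ℝ)) /
    (Nat.factorial (Fintype.card V) : ℝ)

/-- Expected value of χ_FF(G,≪)/χ(G) over a uniformly random order ≪. -/
noncomputable def ffRatioExpect {V : Type*} [Fintype V] (G : SimpleGraph V) : ℝ :=
  letI := Classical.decEq V
  (∑ e : V ≃ Fin (Fintype.card V),
      (ffNumColors G (fun v => (e v : ℕ)) : ℝ) / (G.chromaticNumber.toNat : ℝ)) /
    (Nat.factorial (Fintype.card V) : ℝ)

/-- Probability, over a uniformly random presentation order of the vertex set `V`,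
of the event `P` (a property of the position function of the order). -/
noncomputable def ffProb {V : Type*} [Fintype V] (P : (V → ℕ) → Prop) : ℝ :=
  letI := Classical.decEq V
  letI := Classical.decPred (fun e : V ≃ Fin (Fintype.card V) => P (fun v => (e v : ℕ)))
  ((Finset.univ.filter (fun e : V ≃ Fin (Fintype.card V) => P (fun v => (e v : ℕ)))).card : ℝ) /
    (Nat.factorial (Fintype.card V) : ℝ)

/-- `RFF n`: the maximum over all forests on `n` vertices of the expected value of
χ_FF(T,≪)/χ(T) over a uniformly random order ≪. -/
noncomputable def RFF (n : ℕ) : ℝ :=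
  sSup {x : ℝ | ∃ G : SimpleGraph (Fin n), G.IsAcyclic ∧ x = ffRatioExpect G}

/-- `l` is a bidirected (simple) path in the orientation of `G` induced by `ord`. -/
def IsBidirected {V : Type*} (G : SimpleGraph V) (ord : V → ℕ) (l : List V) : Prop :=
  l.Nodup ∧ ∃ (l₁ l₂ : List V) (m : V), l = l₁ ++ m :: l₂ ∧
    List.Chain' (fun a b => G.Adj a b ∧ ord a < ord b) (l₁ ++ [m]) ∧
    List.Chain' (fun a b => G.Adj a b ∧ ord b < ord a) (m :: l₂)

/-- Vertices of the tree `T^r_i`: lists of pairs `(j,q)` with strictly decreasing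
positive first coordinates, starting below `i`. -/
def TVert (r i : ℕ) : Type :=
  {l : List (Fin i × Fin r) //
    List.Chain (fun a b => b < a) i (l.map fun p => (p.1 : ℕ)) ∧ ∀ p ∈ l, 1 ≤ (p.1 : ℕ)}

/-- The root of `T^r_i`. -/
def TRoot (r i : ℕ) : TVert r i := ⟨[], List.IsChain.singleton _, by simp⟩

/-- The tree `T^r_i`: a vertex is adjacent to each of its one-step extensions. -/
def TGraph (r i : ℕ) : SimpleGraph (TVert r i) :=
  SimpleGraph.fromRel (fun u v => ∃ x, v.val = u.val ++ [x])

instance (r i : ℕ) : Finite (TVert r i) := by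
  have hinj : Function.Injective
      (fun v : TVert r i => (⟨v.val, by
        have h := v.property.1
        haveI : IsTrans ℕ (fun a b => b < a) := ⟨fun a b c h1 h2 => lt_trans h2 h1⟩
        replace h := List.isChain_iff_pairwise.mp h
        have h2 := (List.pairwise_cons.mp h).2
        exact List.Nodup.of_map _ (h2.imp fun hab => (ne_of_lt hab).symm)⟩ :
        {l : List (Fin i × Fin r) // l.Nodup})) :=
    fun a b hab => Subtype.ext (Subtype.mk_eq_mk.mp hab)
  exact Finite.of_injective _ hinj

noncomputable instance (r i : ℕ) : Fintype (TVert r i) := Fintype.ofFinite _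



section AuxProof


lemma ffAux_eq {V : Type*} (G : SimpleGraph V) (ord : V → ℕ) (t : ℕ) (v : V) :
    ffAux G ord t v
      = sInf {i : ℕ | 0 < i ∧ ∀ u, G.Adj u v → ord u < t → ffColor G ord u ≠ i} := by
  rw [ffAux]; rfl

lemma ffColor_eq {V : Type*} (G : SimpleGraph V) (ord : V → ℕ) (v : V) :
    ffColor G ord v
      = sInf {i : ℕ | 0 < i ∧ ∀ u, G.Adj u v → ord u < ord v → ffColor G ord u ≠ i} :=
  ffAux_eq G ord (ord v) v

lemma ffColor_set_nonempty {V : Type*} [Fintype V] (G : SimpleGraph V) (ord : V → ℕ) (v : V) :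
    {i : ℕ | 0 < i ∧ ∀ u, G.Adj u v → ord u < ord v → ffColor G ord u ≠ i}.Nonempty := by
  refine ⟨Finset.univ.sup (fun u => ffColor G ord u) + 1, Nat.succ_pos _, fun u _ _ => ?_⟩
  have : ffColor G ord u ≤ Finset.univ.sup (fun u => ffColor G ord u) :=
    Finset.le_sup (Finset.mem_univ u)
  omega

lemma ffColor_spec {V : Type*} [Fintype V] (G : SimpleGraph V) (ord : V → ℕ) (v : V) :
    0 < ffColor G ord v ∧
      ∀ u, G.Adj u v → ord u < ord v → ffColor G ord u ≠ ffColor G ord v := by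
  have h := Nat.sInf_mem (ffColor_set_nonempty G ord v)
  rw [← ffColor_eq] at h
  exact h

lemma ffColor_pos {V : Type*} [Fintype V] (G : SimpleGraph V) (ord : V → ℕ) (v : V) :
    0 < ffColor G ord v := (ffColor_spec G ord v).1

lemma ffColor_le_of_mem {V : Type*} (G : SimpleGraph V) (ord : V → ℕ) (v : V) (c : ℕ)
    (hc : 0 < c) (h : ∀ u, G.Adj u v → ord u < ord v → ffColor G ord u ≠ c) :
    ffColor G ord v ≤ c := by
  rw [ffColor_eq]; exact Nat.sInf_le ⟨hc, h⟩

lemma ffColor_transfer {V V' : Type*} (G : SimpleGraph V) (G' : SimpleGraph V')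
    (ord : V → ℕ) (ord' : V' → ℕ) (φ : V' → V)
    (hadj : ∀ a b, G'.Adj a b ↔ G.Adj (φ a) (φ b))
    (hord : ∀ a b, ord' a < ord' b ↔ ord (φ a) < ord (φ b))
    (hcross : ∀ a u, G.Adj u (φ a) → ord u < ord (φ a) → ∃ b, u = φ b) :
    ∀ a, ffColor G ord (φ a) = ffColor G' ord' a := by
  suffices H : ∀ n a, ord (φ a) < n → ffColor G ord (φ a) = ffColor G' ord' a by
    exact fun a => H (ord (φ a) + 1) a (Nat.lt_succ_self _)
  intro n
  induction n with
  | zero => exact fun a ha => absurd ha (Nat.not_lt_zero _)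
  | succ n ih =>
    intro a ha
    rw [ffColor_eq, ffColor_eq]
    congr 1
    ext c
    simp only [Set.mem_setOf_eq]
    constructor
    · rintro ⟨hc, h⟩
      refine ⟨hc, fun b hb hlt => ?_⟩
      have hlt' := (hord b a).1 hlt
      have := h (φ b) ((hadj b a).1 hb) hlt'
      rwa [ih b (by omega)] at this
    · rintro ⟨hc, h⟩
      refine ⟨hc, fun u hu hlt => ?_⟩
      obtain ⟨b, rfl⟩ := hcross a u hu hlt
      rw [ih b (by omega)]
      exact h b ((hadj b a).2 hu) ((hord b a).2 hlt)



instance : IsTrans ℕ (fun a b : ℕ => b < a) := ⟨fun _ _ _ h1 h2 => lt_trans h2 h1⟩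

def Chd (r j : ℕ) : Type := {x : Fin j × Fin r // 1 ≤ (x.1 : ℕ)}

instance (r j : ℕ) : Fintype (Chd r j) := by unfold Chd; infer_instance

def typc {r j : ℕ} (c : Chd r j) : ℕ := (c.1.1 : ℕ)

lemma typc_lt {r j : ℕ} (c : Chd r j) : typc c < j := c.1.1.isLt

lemma typc_pos {r j : ℕ} (c : Chd r j) : 1 ≤ typc c := c.2

def embp {r j : ℕ} (c : Chd r j) (p : Fin (typc c) × Fin r) : Fin j × Fin r :=
  (Fin.castLE (le_of_lt (typc_lt c)) p.1, p.2)

lemma embp_injective {r j : ℕ} (c : Chd r j) : Function.Injective (embp c) := by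
  rintro ⟨a1, a2⟩ ⟨b1, b2⟩ h
  simp only [embp, Prod.mk.injEq] at h
  obtain ⟨h1, h2⟩ := h
  have h1' := congrArg Fin.val h1
  simp only [Fin.coe_castLE] at h1'
  exact Prod.ext (Fin.ext h1') h2

lemma embp_val {r j : ℕ} (c : Chd r j) (p : Fin (typc c) × Fin r) :
    ((embp c p).1 : ℕ) = (p.1 : ℕ) := rfl

def emb {r j : ℕ} (c : Chd r j) (w : TVert r (typc c)) : TVert r j :=
  ⟨c.1 :: w.val.map (embp c), by
    constructor
    · rw [List.map_cons]; refine List.isChain_cons_cons.mpr ?_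
      refine ⟨typc_lt c, ?_⟩
      rw [List.map_map]
      have : ((fun p : Fin j × Fin r => (p.1 : ℕ)) ∘ embp c)
          = (fun p : Fin (typc c) × Fin r => (p.1 : ℕ)) := rfl
      rw [this]
      exact w.property.1
    · rintro p hp
      rcases List.mem_cons.mp hp with h | h
      · exact h ▸ c.2
      · obtain ⟨q, hq, rfl⟩ := List.mem_map.mp h
        exact w.property.2 q hq⟩

lemma emb_val_map {r j : ℕ} (c : Chd r j) (w : TVert r (typc c)) :
    ((emb c w).val.map fun p => (p.1 : ℕ))
      = typc c :: (w.val.map fun p => (p.1 : ℕ)) := by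
  simp only [emb, List.map_cons, List.map_map]
  rfl

lemma emb_injective {r j : ℕ} (c : Chd r j) : Function.Injective (emb c) := by
  intro a b h
  have := congrArg Subtype.val h
  simp only [emb, List.cons.injEq] at this
  exact Subtype.ext (List.map_injective_iff.mpr (embp_injective c) this.2)

lemma emb_ne_root {r j : ℕ} (c : Chd r j) (w : TVert r (typc c)) :
    emb c w ≠ TRoot r j := by
  intro h
  have := congrArg Subtype.val h
  simp [emb, TRoot] at this

section TreeLemmas
variable {r j : ℕ}

lemma tgraph_adj {i : ℕ} (u v : TVert r i) :
    (TGraph r i).Adj u v ↔ u ≠ v ∧ ((∃ x, v.val = u.val ++ [x]) ∨ ∃ x, u.val = v.val ++ [x]) := by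
  unfold TGraph
  rw [SimpleGraph.fromRel_adj]

lemma tvert_surj (v : TVert r j) :
    v = TRoot r j ∨ ∃ (c : Chd r j) (w : TVert r (typc c)), emb c w = v := by
  obtain ⟨l, hl⟩ := v
  cases l with
  | nil => exact Or.inl rfl
  | cons x t =>
    right
    have hx1 : 1 ≤ (x.1 : ℕ) := hl.2 x List.mem_cons_self
    set c : Chd r j := ⟨x, hx1⟩ with hc
    have hchain : List.Chain (fun a b => b < a) (x.1 : ℕ) (t.map fun p => (p.1 : ℕ)) := by
      have := hl.1
      rw [List.map_cons] at this; replace this := List.isChain_cons_cons.mp this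
      exact this.2
    have H : ∀ p ∈ t, (p.1 : ℕ) < typc c := by
      intro p hp
      have hpw := (List.isChain_iff_pairwise.mp hchain)
      have := (List.pairwise_cons.mp hpw).1 (p.1 : ℕ) (List.mem_map_of_mem hp)
      exact this
    refine ⟨c, ⟨t.pmap (fun p hp => ((⟨(p.1 : ℕ), hp⟩ : Fin (typc c)), p.2)) H, ?_, ?_⟩, ?_⟩
    · rw [List.map_pmap]
      rw [List.pmap_eq_map]
      exact hchain
    · intro p hp
      obtain ⟨q, hq, rfl⟩ := List.mem_pmap.mp hp
      exact hl.2 q (List.mem_cons_of_mem _ hq)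
    · apply Subtype.ext
      show (c.1 :: _) = x :: t
      congr 1
      rw [List.map_pmap]
      exact (List.pmap_eq_map (f := id) H).trans (List.map_id t)

lemma adj_emb_iff (c : Chd r j) (a b : TVert r (typc c)) :
    (TGraph r (typc c)).Adj a b ↔ (TGraph r j).Adj (emb c a) (emb c b) := by
  have key : ∀ (a b : TVert r (typc c)),
      (∃ x, b.val = a.val ++ [x]) ↔ ∃ x, (emb c b).val = (emb c a).val ++ [x] := by
    intro a b
    constructor
    · rintro ⟨x, hx⟩
      exact ⟨embp c x, by simp [emb, hx]⟩
    · rintro ⟨x, hx⟩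
      simp only [emb, List.cons_append, List.cons.injEq] at hx
      obtain ⟨l₁, l₂, hb, h1, h2⟩ := List.map_eq_append_iff.mp hx.2
      cases l₂ with
      | nil => simp at h2
      | cons y t =>
        cases t with
        | nil =>
          simp only [List.map_cons, List.map_nil] at h2
          refine ⟨y, ?_⟩
          rw [hb, List.map_injective_iff.mpr (embp_injective c) h1]
        | cons z t' => simp at h2
  constructor
  · intro h
    rw [tgraph_adj] at h ⊢
    exact ⟨fun he => h.1 (emb_injective c he), by
      rcases h.2 with h' | h'
      · exact Or.inl ((key a b).mp h')
      · exact Or.inr ((key b a).mp h')⟩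
  · intro h
    rw [tgraph_adj] at h ⊢
    refine ⟨fun he => h.1 (congrArg (emb c) he), ?_⟩
    rcases h.2 with h' | h'
    · exact Or.inl ((key a b).mpr h')
    · exact Or.inr ((key b a).mpr h')

lemma crossing (c : Chd r j) (a : TVert r (typc c)) (u : TVert r j)
    (hadj : (TGraph r j).Adj u (emb c a)) :
    (∃ b, u = emb c b) ∨ (u = TRoot r j ∧ a = TRoot r (typc c)) := by
  rw [tgraph_adj] at hadj
  rcases hadj.2 with ⟨x, hx⟩ | ⟨x, hx⟩
  · -- (emb c a).val = u.val ++ [x]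
    cases hu : u.val with
    | nil =>
      right
      have : (emb c a).val = [x] := by rw [hx, hu]; rfl
      simp only [emb] at this
      rw [List.cons.injEq] at this
      have ha : a.val = [] := List.map_eq_nil_iff.mp this.2
      exact ⟨Subtype.ext hu, Subtype.ext ha⟩
    | cons y s =>
      left
      have hx' : c.1 :: a.val.map (embp c) = y :: (s ++ [x]) := by
        have := hx; rw [hu] at this; simpa [emb] using this
      rw [List.cons.injEq] at hx'
      obtain ⟨l₁, l₂, hav, h1, h2⟩ := List.map_eq_append_iff.mp hx'.2
      cases l₂ with
      | nil => simp at h2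
      | cons p t =>
        cases t with
        | nil =>
          refine ⟨⟨l₁, ?_, ?_⟩, ?_⟩
          · have := a.property.1
            rw [hav, List.map_append] at this; replace this := List.isChain_iff_pairwise.mp this
            refine List.isChain_iff_pairwise.mpr ?_
            refine this.sublist ?_
            rw [← List.cons_append]
            exact (List.sublist_append_left _ _)
          · intro q hq
            exact a.property.2 q (by rw [hav]; exact List.mem_append_left _ hq)
          · apply Subtype.ext
            show u.val = c.1 :: l₁.map (embp c)
            rw [hu, h1, ← hx'.1]
        | cons z t' => simp at h2
  · -- u.val = (emb c a).val ++ [x]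
    left
    have hu : u.val = c.1 :: (a.val.map (embp c) ++ [x]) := by simpa [emb] using hx
    have hxlt : (x.1 : ℕ) < typc c := by
      have hch := u.property.1
      rw [hu, List.map_cons] at hch; replace hch := List.isChain_iff_pairwise.mp hch
      have h2 := (List.pairwise_cons.mp hch).2
      have := (List.pairwise_cons.mp h2).1 (x.1 : ℕ) ?_
      · exact this
      · rw [List.map_append]
        exact List.mem_append_right _ (by simp)
    have hx1 : 1 ≤ (x.1 : ℕ) := u.property.2 x (by rw [hu]; simp)
    refine ⟨⟨a.val ++ [((⟨(x.1 : ℕ), hxlt⟩ : Fin (typc c)), x.2)], ?_, ?_⟩, ?_⟩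
    · have hch := u.property.1
      rw [hu, List.map_cons] at hch; replace hch := List.isChain_cons_cons.mp hch
      have h2 := hch.2
      rw [List.map_append] at h2 ⊢
      rw [List.map_map] at h2
      exact h2
    · intro p hp
      rcases List.mem_append.mp hp with h | h
      · exact a.property.2 p h
      · simp only [List.mem_singleton] at h
        subst h; exact hx1
    · apply Subtype.ext
      show u.val = c.1 :: (a.val ++ [((⟨(x.1 : ℕ), hxlt⟩ : Fin (typc c)), x.2)]).map (embp c)
      rw [hu, List.map_append]
      congr 2

lemma root_nbr (u : TVert r j) (h : (TGraph r j).Adj u (TRoot r j)) :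
    ∃ c : Chd r j, u = emb c (TRoot r (typc c)) := by
  rw [tgraph_adj] at h
  rcases h.2 with ⟨x, hx⟩ | ⟨x, hx⟩
  · -- root.val = u.val ++ [x] : impossible
    exfalso
    have : ([] : List (Fin j × Fin r)) = u.val ++ [x] := hx
    simpa using this.symm
  · -- u.val = [] ++ [x]
    have hu : u.val = [x] := by simpa [TRoot] using hx
    have hx1 : 1 ≤ (x.1 : ℕ) := u.property.2 x (by rw [hu]; simp)
    exact ⟨⟨x, hx1⟩, Subtype.ext (by rw [hu]; rfl)⟩

lemma adj_child_root (c : Chd r j) :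
    (TGraph r j).Adj (emb c (TRoot r (typc c))) (TRoot r j) := by
  rw [tgraph_adj]
  refine ⟨fun h => emb_ne_root c _ h, Or.inr ⟨c.1, ?_⟩⟩
  rfl

end TreeLemmas

section Psi
variable (r j : ℕ)

def psiFun : (Option (Σ c : Chd r j, TVert r (typc c))) → TVert r j
  | none => TRoot r j
  | some ⟨c, w⟩ => emb c w

lemma psiFun_bijective : Function.Bijective (psiFun r j) := by
  constructor
  · rintro (_ | ⟨c, w⟩) (_ | ⟨c', w'⟩) h
    · rfl
    · exact absurd h.symm (emb_ne_root c' w')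
    · exact absurd h (emb_ne_root c w)
    · simp only [psiFun] at h
      have hval := congrArg Subtype.val h
      simp only [emb, List.cons.injEq] at hval
      have hc : c = c' := Subtype.ext hval.1
      subst hc
      have hw : w = w' := emb_injective c h
      rw [hw]
  · intro v
    rcases tvert_surj v with h | ⟨c, w, h⟩
    · exact ⟨none, h.symm⟩
    · exact ⟨some ⟨c, w⟩, h⟩

noncomputable def psiEquiv : (Option (Σ c : Chd r j, TVert r (typc c))) ≃ TVert r j :=
  Equiv.ofBijective _ (psiFun_bijective r j)

lemma card_tvert : Fintype.card (TVert r j) = 1 + ∑ c : Chd r j, Fintype.card (TVert r (typc c)) := by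
  rw [← Fintype.card_congr (psiEquiv r j), Fintype.card_option, Fintype.card_sigma]
  omega

end Psi

section Grundy
variable {r : ℕ}

lemma block_transfer {j : ℕ} (ord : TVert r j → ℕ) (c : Chd r j)
    (hearly : ord (emb c (TRoot r (typc c))) < ord (TRoot r j)) (a : TVert r (typc c)) :
    ffColor (TGraph r j) ord (emb c a) = ffColor (TGraph r (typc c)) (ord ∘ emb c) a := by
  refine ffColor_transfer (TGraph r j) (TGraph r (typc c)) ord (ord ∘ emb c) (emb c)
    (fun a b => adj_emb_iff c a b) (fun a b => Iff.rfl) ?_ a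
  intro b u hadj hlt
  rcases crossing c b u hadj with ⟨w, rfl⟩ | ⟨h1, h2⟩
  · exact ⟨w, rfl⟩
  · subst h1; subst h2
    exact absurd hearly (not_lt.mpr (le_of_lt hlt))

lemma grundy : ∀ j, 1 ≤ j → ∀ ord : TVert r j → ℕ,
    ffColor (TGraph r j) ord (TRoot r j) ≤ j := by
  intro j
  induction j using Nat.strong_induction_on with
  | _ j ih =>
    intro hj ord
    apply ffColor_le_of_mem _ _ _ j (by omega)
    intro u hadj hlt
    obtain ⟨c, rfl⟩ := root_nbr u hadj
    rw [block_transfer ord c hlt]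
    have := ih (typc c) (typc_lt c) (typc_pos c) (ord ∘ emb c)
    have h2 := typc_lt c
    omega

lemma extract {j : ℕ} (ord : TVert r j → ℕ)
    (hbad : ffColor (TGraph r j) ord (TRoot r j) < j) :
    ∃ m, 1 ≤ m ∧ m < j ∧ ∀ c : Chd r j, typc c = m →
      ord (emb c (TRoot r (typc c))) < ord (TRoot r j) →
      ffColor (TGraph r (typc c)) (ord ∘ emb c) (TRoot r (typc c)) < typc c := by
  have hspec := ffColor_spec (TGraph r j) ord (TRoot r j)
  refine ⟨ffColor (TGraph r j) ord (TRoot r j), hspec.1, hbad, ?_⟩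
  intro c hcm hearly
  have hne := hspec.2 _ (adj_child_root c) hearly
  rw [block_transfer ord c hearly] at hne
  have hle := grundy (typc c) (typc_pos c) (ord ∘ emb c)
  omega

end Grundy

section Counting
open scoped Classical
variable {r j : ℕ}

noncomputable def assemble (N : ℕ) (a : Fin N)
    (h : ∀ c : Chd r j, TVert r (typc c) → Fin N) : TVert r j → Fin N :=
  fun v => Option.rec a (fun x => h x.1 x.2) ((psiEquiv r j).symm v)

lemma assemble_root (N : ℕ) (a : Fin N) (h : ∀ c : Chd r j, TVert r (typc c) → Fin N) :
    assemble N a h (TRoot r j) = a := by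
  unfold assemble
  have : (psiEquiv r j).symm (TRoot r j) = none := by
    have := (psiEquiv r j).symm_apply_apply none
    exact this
  rw [this]

lemma assemble_emb (N : ℕ) (a : Fin N) (h : ∀ c : Chd r j, TVert r (typc c) → Fin N)
    (c : Chd r j) (w : TVert r (typc c)) :
    assemble N a h (emb c w) = h c w := by
  unfold assemble
  have : (psiEquiv r j).symm (emb c w) = some ⟨c, w⟩ := by
    have := (psiEquiv r j).symm_apply_apply (some ⟨c, w⟩)
    exact this
  rw [this]

noncomputable def countEquiv (N : ℕ) (P₀ : Fin N → Prop)
    (Q : ∀ c : Chd r j, (TVert r (typc c) → Fin N) → Prop) :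
    {g : TVert r j → Fin N // P₀ (g (TRoot r j)) ∧ ∀ c, Q c (g ∘ emb c)}
      ≃ {a : Fin N // P₀ a} × ∀ c : Chd r j, {h : TVert r (typc c) → Fin N // Q c h} where
  toFun g := (⟨g.1 (TRoot r j), g.2.1⟩, fun c => ⟨g.1 ∘ emb c, g.2.2 c⟩)
  invFun p := ⟨assemble N p.1.1 (fun c => (p.2 c).1), by
    constructor
    · rw [assemble_root]; exact p.1.2
    · intro c
      have : assemble N p.1.1 (fun c => (p.2 c).1) ∘ emb c = (p.2 c).1 := by
        funext w; exact assemble_emb _ _ _ c w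
      rw [this]; exact (p.2 c).2⟩
  left_inv := by
    rintro ⟨g, hg⟩
    apply Subtype.ext
    funext v
    show assemble N (g (TRoot r j)) (fun c => g ∘ emb c) v = g v
    rcases h' : (psiEquiv r j).symm v with _ | ⟨c, w⟩
    · have hv : v = TRoot r j := by
        have := (psiEquiv r j).apply_symm_apply v
        rw [h'] at this; exact this.symm
      rw [hv, assemble_root]
    · have hv : v = emb c w := by
        have := (psiEquiv r j).apply_symm_apply v
        rw [h'] at this; exact this.symm
      rw [hv, assemble_emb]; rfl
  right_inv := by
    rintro ⟨a, h⟩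
    refine Prod.ext ?_ ?_
    · apply Subtype.ext
      show assemble N a.1 (fun c => (h c).1) (TRoot r j) = a.1
      exact assemble_root _ _ _
    · funext c
      apply Subtype.ext
      show (assemble N a.1 (fun c => (h c).1)) ∘ emb c = (h c).1
      funext w
      exact assemble_emb _ _ _ c w

lemma count_split (N : ℕ) (P₀ : Fin N → Prop)
    (Q : ∀ c : Chd r j, (TVert r (typc c) → Fin N) → Prop) :
    Nat.card {g : TVert r j → Fin N // P₀ (g (TRoot r j)) ∧ ∀ c, Q c (g ∘ emb c)}
      = Nat.card {a : Fin N // P₀ a}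
        * ∏ c : Chd r j, Nat.card {h : TVert r (typc c) → Fin N // Q c h} := by
  rw [Nat.card_congr (countEquiv N P₀ Q), Nat.card_prod, Nat.card_pi]

lemma nat_card_filter {α : Type*} [Fintype α] (p : α → Prop) [DecidablePred p] :
    Nat.card {x // p x} = (Finset.univ.filter p).card := by
  rw [Nat.card_eq_fintype_card]
  convert Fintype.card_subtype p

end Counting

section MainDefs
open scoped Classical

noncomputable def nsub (r j : ℕ) : ℕ := ∑ c : Chd r j, Fintype.card (TVert r (typc c))

lemma card_tvert' (r j : ℕ) : Fintype.card (TVert r j) = nsub r j + 1 := by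
  rw [card_tvert]; unfold nsub; omega

lemma card_root_fixed (r m N : ℕ) (u' : Fin N) :
    Nat.card {h : TVert r m → Fin N // h (TRoot r m) = u'} = N ^ nsub r m := by
  have hcs := count_split (r := r) (j := m) N (fun a : Fin N => a = u')
    (fun (c : Chd r m) (_ : TVert r (typc c) → Fin N) => True)
  refine Eq.trans (Nat.card_congr (Equiv.subtypeEquivRight (fun h => ?_)))
    (hcs.trans ?_)
  · simp
  · have h1 : Nat.card {a : Fin N // a = u'} = 1 := by
      haveI := Unique.subtypeEq u'
      exact Nat.card_unique
    rw [h1, one_mul]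
    have key : ∀ c : Chd r m,
        Nat.card {h : TVert r (typc c) → Fin N //
          (fun (_ : TVert r (typc c) → Fin N) => True) h}
          = N ^ Fintype.card (TVert r (typc c)) := by
      intro c
      rw [Nat.card_congr (Equiv.subtypeUnivEquiv (fun _ => trivial)),
        Nat.card_eq_fintype_card, Fintype.card_fun, Fintype.card_fin]
    refine Eq.trans (Finset.prod_congr rfl (fun c _ => key c)) ?_
    exact Finset.prod_pow_eq_pow_sum _ _ _

lemma chd_card (r : ℕ) {j m : ℕ} (h1 : 1 ≤ m) (hm : m < j) :
    (Finset.univ.filter (fun c : Chd r j => typc c = m)).card = r := by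
  rw [← nat_card_filter]
  have e : {c : Chd r j // typc c = m} ≃ Fin r :=
    { toFun := fun c => c.1.1.2
      invFun := fun q => ⟨⟨(⟨m, hm⟩, q), h1⟩, rfl⟩
      left_inv := by
        rintro ⟨⟨⟨f, q⟩, hf⟩, hm'⟩
        apply Subtype.ext
        apply Subtype.ext
        have : (⟨m, hm⟩ : Fin j) = f := Fin.ext hm'.symm
        simp [this]
      right_inv := fun q => rfl }
  rw [Nat.card_congr e, Nat.card_eq_fintype_card, Fintype.card_fin]

lemma arith_main {k r : ℕ} {γ : ℝ} (hk : 3 ≤ k) (hγ0 : 0 < γ) (hγ1 : γ < 1)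
    (hr : 10 / γ ^ 2 * k * Real.log k ≤ (r : ℝ)) :
    (k : ℝ) * (1 - 3 * γ / (8 * k)) ^ r ≤ γ / (4 * k) := by
  have hk3 : (3 : ℝ) ≤ (k : ℝ) := by exact_mod_cast hk
  have hkpos : (0 : ℝ) < k := by linarith
  have hL : 1 ≤ Real.log k := by
    rw [← Real.log_exp 1]
    apply Real.log_le_log (Real.exp_pos 1)
    have := Real.exp_one_lt_d9
    linarith
  set x : ℝ := 3 * γ / (8 * k) with hx
  have hx0 : 0 < x := by positivity
  have hx1 : x < 1 := by
    rw [hx, div_lt_one (by positivity)]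
    nlinarith
  have h1 : (1 - x) ^ r ≤ Real.exp (-((r : ℝ) * x)) := by
    calc (1 - x) ^ r ≤ Real.exp (-x) ^ r := by
          apply pow_le_pow_left₀ (by linarith)
          have := Real.add_one_le_exp (-x)
          linarith
      _ = Real.exp (-((r : ℝ) * x)) := by
          rw [← Real.exp_nat_mul]; ring_nf
  have hrx : Real.log 4 + 2 * Real.log k + Real.log (1 / γ) ≤ (r : ℝ) * x := by
    have hrge : 10 / γ ^ 2 * k * Real.log k * x ≤ (r : ℝ) * x :=
      mul_le_mul_of_nonneg_right hr (le_of_lt hx0)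
    have hxval : 10 / γ ^ 2 * k * Real.log k * x = 30 / 8 * (Real.log k / γ) := by
      rw [hx]; field_simp; ring
    rw [hxval] at hrge
    refine le_trans ?_ hrge
    have hlog4 : Real.log 4 ≤ 1.39 := by
      have h2 : Real.log 4 = 2 * Real.log 2 := by
        rw [show (4 : ℝ) = 2 ^ 2 by norm_num, Real.log_pow]; norm_num
      have := Real.log_two_lt_d9
      rw [h2]; linarith
    have hlogs : Real.log (1 / γ) ≤ 1 / γ - 1 := Real.log_le_sub_one_of_pos (by positivity)
    set s : ℝ := 1 / γ with hs
    have hs1 : 1 ≤ s := by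
      rw [hs, le_div_iff₀ hγ0]; linarith
    have hγs : Real.log k / γ = Real.log k * s := by rw [hs]; ring
    rw [hγs]
    set L : ℝ := Real.log k
    -- goal : log 4 + 2 L + log s ≤ 30/8 * (L * s)
    have key : 1.39 + 2 * L + (s - 1) ≤ 30 / 8 * (L * s) := by nlinarith
    linarith
  have h2 : Real.exp (-((r:ℝ) * x)) ≤ γ / (4 * k * k) := by
    rw [← Real.le_log_iff_exp_le (by positivity)]
    have : Real.log (γ / (4 * k * k)) = -(Real.log 4 + 2 * Real.log k + Real.log (1/γ)) := by
      rw [Real.log_div (ne_of_gt hγ0) (by positivity)]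
      rw [show (4:ℝ) * k * k = 4 * k^2 by ring]
      rw [Real.log_mul (by norm_num) (by positivity), Real.log_pow]
      rw [Real.log_div one_ne_zero (ne_of_gt hγ0), Real.log_one]
      push_cast
      ring
    rw [this]
    linarith
  calc (k:ℝ) * (1 - x) ^ r ≤ (k:ℝ) * (γ / (4 * k * k)) := by
        apply mul_le_mul_of_nonneg_left (le_trans h1 h2) (le_of_lt hkpos)
    _ = γ / (4 * k) := by field_simp
end MainDefs

section MainInduction
open scoped Classical
set_option maxHeartbeats 1000000

noncomputable def thr (γ : ℝ) (k N j : ℕ) : ℝ := ((2*j : ℝ) - 1) * γ * N / (2*k)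

noncomputable def cnt (r N j : ℕ) (u : Fin N) : ℕ :=
  Nat.card {g : TVert r j → Fin N //
    g (TRoot r j) = u ∧ ffColor (TGraph r j) (fun v => ((g v : ℕ))) (TRoot r j) < j}

lemma cast_nat_sub (a b : ℕ) : (a : ℝ) - (b : ℝ) ≤ ((a - b : ℕ) : ℝ) := by
  rcases le_total b a with h | h
  · rw [Nat.cast_sub h]
  · have h0 : a - b = 0 := Nat.sub_eq_zero_of_le h
    have : (a : ℝ) ≤ (b : ℝ) := by exact_mod_cast h
    rw [h0]; simp; linarith

lemma child_bound {k r N : ℕ} {γ : ℝ} (hk : 3 ≤ k) (hγ0 : 0 < γ) (hγ1 : γ < 1)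
    (hN : 2 * (k:ℝ) / γ ≤ (N:ℝ))
    {j : ℕ} (u : Fin N)
    (M : ℕ) (hM1 : 1 ≤ M) (hMj : M < j)
    (hIH : ∀ u' : Fin N, thr γ k N M ≤ (u'.val:ℝ) →
      (cnt r N M u' : ℝ) ≤ γ/(4*k) * (N:ℝ)^(nsub r M))
    (hu : thr γ k N j ≤ (u.val:ℝ)) :
    (Nat.card {h : TVert r M → Fin N // (h (TRoot r M)).val < u.val →
        ffColor (TGraph r M) (fun v => ((h v : ℕ))) (TRoot r M) < M} : ℝ)
      ≤ (1 - 3*γ/(8*k)) * (N:ℝ)^(nsub r M + 1) := by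
  have hk3 : (3:ℝ) ≤ (k:ℝ) := by exact_mod_cast hk
  have hkpos : (0:ℝ) < k := by linarith
  have hNpos : (0:ℝ) < N := lt_of_lt_of_le (by positivity) hN
  have hN0 : N ≠ 0 := by
    have := hNpos.ne'
    exact_mod_cast this
  have hγN : 1 ≤ γ * N / (2*k) := by
    rw [le_div_iff₀ (by positivity)]
    rw [div_le_iff₀ hγ0] at hN
    nlinarith
  set bad : (TVert r M → Fin N) → Prop :=
    fun h => ffColor (TGraph r M) (fun v => ((h v : ℕ))) (TRoot r M) < M with hbad
  set P : (TVert r M → Fin N) → Prop :=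
    fun h => (h (TRoot r M)).val < u.val ∧ ¬ bad h with hPdef
  have hsplit : (Finset.univ.filter P).card
      + (Finset.univ.filter (fun h => ¬ P h)).card = N ^ (nsub r M + 1) := by
    rw [Finset.card_filter_add_card_filter_not, Finset.card_univ, Fintype.card_fun,
      Fintype.card_fin, card_tvert']
  have hQP : Nat.card {h : TVert r M → Fin N // (h (TRoot r M)).val < u.val →
        ffColor (TGraph r M) (fun v => ((h v : ℕ))) (TRoot r M) < M}
      = (Finset.univ.filter (fun h => ¬ P h)).card := by
    rw [nat_card_filter]
    congr 1
    apply Finset.filter_congr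
    intro h _
    rw [hPdef]
    simp only [hbad]
    constructor
    · intro himp hcon; exact hcon.2 (himp hcon.1)
    · intro hncon hlt
      by_contra hnb
      exact hncon ⟨hlt, hnb⟩
  set ε : ℝ := γ / (4*k) with hε
  have hε0 : 0 < ε := by positivity
  have hε1 : ε ≤ 1/12 := by
    rw [hε, div_le_div_iff₀ (by positivity) (by norm_num)]
    nlinarith
  have hthrM : 0 ≤ thr γ k N M := by
    unfold thr
    have hM1' : (1:ℝ) ≤ (M:ℝ) := by exact_mod_cast hM1
    have h2M : (1:ℝ) ≤ (2*M:ℝ) - 1 := by linarith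
    have : 0 ≤ ((2*M:ℝ) - 1) * γ * N := by positivity
    positivity
  -- the set of early arrival values above threshold
  set S₀ : Finset (Fin N) := Finset.univ.filter
    (fun u' : Fin N => thr γ k N M ≤ (u'.val:ℝ) ∧ u'.val < u.val) with hS₀
  set F : Fin N → Finset (TVert r M → Fin N) := fun u' =>
    Finset.univ.filter (fun h : TVert r M → Fin N => h (TRoot r M) = u' ∧ ¬ bad h) with hF
  have hsub : S₀.biUnion F ⊆ Finset.univ.filter P := by
    intro h hh
    rw [Finset.mem_biUnion] at hh
    obtain ⟨u', hu', hh⟩ := hh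
    simp only [hF, hS₀, hPdef, Finset.mem_filter, Finset.mem_univ, true_and] at hh hu' ⊢
    exact ⟨by rw [hh.1]; exact hu'.2, hh.2⟩
  have hdisj : ∀ x ∈ S₀, ∀ y ∈ S₀, x ≠ y → Disjoint (F x) (F y) := by
    intro x _ y _ hxy
    rw [Finset.disjoint_left]
    intro h hx hy
    simp only [hF, Finset.mem_filter, Finset.mem_univ, true_and] at hx hy
    exact hxy (hx.1 ▸ hy.1 ▸ rfl)
  have hsum : ∑ u' ∈ S₀, (F u').card ≤ (Finset.univ.filter P).card := by
    rw [← Finset.card_biUnion hdisj]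
    exact Finset.card_le_card hsub
  have hper : ∀ u' ∈ S₀, (1-ε) * (N:ℝ)^(nsub r M) ≤ ((F u').card : ℝ) := by
    intro u' hu'
    simp only [hS₀, Finset.mem_filter, Finset.mem_univ, true_and] at hu'
    have hIH' := hIH u' hu'.1
    have hcnt : cnt r N M u' = (Finset.univ.filter
        (fun h : TVert r M → Fin N => h (TRoot r M) = u' ∧ bad h)).card := by
      unfold cnt
      rw [nat_card_filter]
    have hfix : (Finset.univ.filter
        (fun h : TVert r M → Fin N => h (TRoot r M) = u')).card = N ^ (nsub r M) := by
      rw [← nat_card_filter]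
      exact card_root_fixed r M N u'
    have hsplit2 : (Finset.univ.filter
          (fun h : TVert r M → Fin N => h (TRoot r M) = u' ∧ bad h)).card
        + (F u').card = N ^ (nsub r M) := by
      simp only [hF]
      rw [← hfix, ← Finset.filter_filter, ← Finset.filter_filter]
      exact Finset.card_filter_add_card_filter_not bad
    rw [hcnt] at hIH'
    have hcast := congrArg (fun x : ℕ => (x : ℝ)) hsplit2
    push_cast at hcast
    rw [hε] at *
    linarith
  have hS₀card : (u.val : ℝ) - thr γ k N M - 1 ≤ (S₀.card : ℝ) := by
    have hinj : (Finset.Ico ⌈thr γ k N M⌉₊ u.val).card ≤ S₀.card := by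
      apply Finset.card_le_card_of_injOn (fun t => (⟨t % N, Nat.mod_lt _ (Nat.pos_of_ne_zero hN0)⟩ : Fin N))
      · intro t ht
        rw [Finset.mem_coe, Finset.mem_Ico] at ht
        have htN : t < N := lt_trans ht.2 u.isLt
        have hmod : t % N = t := Nat.mod_eq_of_lt htN
        simp only [hS₀, Finset.mem_coe, Finset.mem_filter, Finset.mem_univ, true_and, hmod]
        refine ⟨le_trans (Nat.le_ceil _) ?_, ht.2⟩
        exact_mod_cast ht.1
      · intro a ha b hb hab
        rw [Finset.mem_coe, Finset.mem_Ico] at ha hb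
        have haN : a % N = a := Nat.mod_eq_of_lt (lt_trans ha.2 u.isLt)
        have hbN : b % N = b := Nat.mod_eq_of_lt (lt_trans hb.2 u.isLt)
        have := congrArg Fin.val hab
        simpa [haN, hbN] using this
    rw [Nat.card_Ico] at hinj
    have h1 : ((u.val - ⌈thr γ k N M⌉₊ : ℕ) : ℝ) ≤ (S₀.card : ℝ) := by exact_mod_cast hinj
    refine le_trans ?_ (le_trans (cast_nat_sub _ _) h1)
    have := Nat.ceil_lt_add_one hthrM
    linarith
  have hgap : γ*(N:ℝ)/(2*k) ≤ (u.val:ℝ) - thr γ k N M - 1 := by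
    have hjM : (M:ℝ) + 1 ≤ (j:ℝ) := by exact_mod_cast hMj
    set D : ℝ := γ * (N:ℝ) / (2*k) with hD
    have hthr_eq : ∀ m : ℕ, thr γ k N m = ((2*m:ℝ) - 1) * D := by
      intro m
      rw [hD]
      unfold thr
      field_simp
    have hD1 : 1 ≤ D := hγN
    rw [hthr_eq] at hu ⊢
    have key : 0 ≤ ((j:ℝ) - M - 1) * D := mul_nonneg (by linarith) (by linarith)
    push_cast at hu ⊢
    nlinarith [key, hD1, hu]
  -- combine
  have h1eps : (3:ℝ)/4 ≤ 1 - ε := by linarith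
  have hNp : (0:ℝ) ≤ (N:ℝ)^(nsub r M) := by positivity
  have hPlow : 3*γ/(8*k) * (N:ℝ) * (N:ℝ)^(nsub r M)
      ≤ ((Finset.univ.filter P).card : ℝ) := by
    have h2 : ∑ _u' ∈ S₀, ((1-ε) * (N:ℝ)^(nsub r M)) ≤ ∑ u' ∈ S₀, ((F u').card : ℝ) :=
      Finset.sum_le_sum hper
    rw [Finset.sum_const, nsmul_eq_mul] at h2
    have h3 : (∑ u' ∈ S₀, ((F u').card : ℝ)) ≤ ((Finset.univ.filter P).card : ℝ) := by
      exact_mod_cast hsum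
    have h4 : ((u.val:ℝ) - thr γ k N M - 1) * ((1-ε) * (N:ℝ)^(nsub r M))
        ≤ (S₀.card:ℝ) * ((1-ε) * (N:ℝ)^(nsub r M)) :=
      mul_le_mul_of_nonneg_right hS₀card (mul_nonneg (by linarith) hNp)
    have h5 : 3*γ/(8*k) * (N:ℝ) ≤ ((u.val:ℝ) - thr γ k N M - 1) * (1-ε) := by
      have heq : 3*γ/(8*k) * (N:ℝ) = (γ*(N:ℝ)/(2*k)) * (3/4) := by field_simp; ring
      rw [heq]
      have hb : (0:ℝ) ≤ (u.val:ℝ) - thr γ k N M - 1 := by nlinarith [hgap, hγN]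
      exact mul_le_mul hgap h1eps (by norm_num) hb
    calc 3*γ/(8*k) * (N:ℝ) * (N:ℝ)^(nsub r M)
        ≤ (((u.val:ℝ) - thr γ k N M - 1) * (1-ε)) * (N:ℝ)^(nsub r M) :=
          mul_le_mul_of_nonneg_right h5 hNp
      _ = ((u.val:ℝ) - thr γ k N M - 1) * ((1-ε) * (N:ℝ)^(nsub r M)) := by ring
      _ ≤ _ := le_trans h4 (le_trans h2 h3)
  -- final
  -- final
  have hcastsplit := congrArg (fun x : ℕ => (x : ℝ)) hsplit
  push_cast at hcastsplit
  rw [hQP]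
  have hNpow : (0:ℝ) < (N:ℝ)^(nsub r M) := by positivity
  have hexp : (N:ℝ)^(nsub r M + 1) = (N:ℝ) * (N:ℝ)^(nsub r M) := by ring
  rw [hexp] at hcastsplit ⊢
  linarith [hPlow, hcastsplit]

end MainInduction

section MainInd
open scoped Classical
set_option maxHeartbeats 1000000

def Qq (r j N : ℕ) (u : Fin N) (m : ℕ) : ∀ c : Chd r j, (TVert r (typc c) → Fin N) → Prop :=
  fun c h => typc c = m → ((h (TRoot r (typc c))).val < u.val →
    ffColor (TGraph r (typc c)) (fun v => ((h v : ℕ))) (TRoot r (typc c)) < typc c)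

theorem main_ind {k r N : ℕ} {γ : ℝ} (hk : 3 ≤ k) (hγ0 : 0 < γ) (hγ1 : γ < 1)
    (hr : 10 / γ ^ 2 * k * Real.log k ≤ (r : ℝ))
    (hN : 2 * (k:ℝ) / γ ≤ (N:ℝ)) :
    ∀ j, j ≤ k → ∀ u : Fin N, thr γ k N j ≤ (u.val : ℝ) →
      (cnt r N j u : ℝ) ≤ γ / (4*k) * (N:ℝ) ^ (nsub r j) := by
  intro j
  induction j using Nat.strong_induction_on with
  | _ j ih =>
  intro hjk u hu
  have hk3 : (3:ℝ) ≤ (k:ℝ) := by exact_mod_cast hk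
  have hkpos : (0:ℝ) < k := by linarith
  have hNpos : (0:ℝ) < N := lt_of_lt_of_le (by positivity) hN
  set β : ℝ := 1 - 3*γ/(8*k) with hβ
  have hβ0 : 0 ≤ β := by
    rw [hβ]
    have h1 : 3*γ/(8*k) ≤ 1 := by
      rw [div_le_one (by positivity)]
      nlinarith
    linarith
  set Am : ℕ → Finset (TVert r j → Fin N) := fun m =>
    Finset.univ.filter (fun g => g (TRoot r j) = u ∧ ∀ c, Qq r j N u m c (g ∘ emb c)) with hAm
  -- Step A : union bound
  have hA : (cnt r N j u : ℝ) ≤ ∑ m ∈ Finset.Ico 1 j, ((Am m).card : ℝ) := by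
    have hnat : cnt r N j u ≤ ∑ m ∈ Finset.Ico 1 j, (Am m).card := by
      unfold cnt
      rw [nat_card_filter]
      refine le_trans (Finset.card_le_card ?_) Finset.card_biUnion_le
      intro g hg
      simp only [Finset.mem_filter, Finset.mem_univ, true_and] at hg
      obtain ⟨hgu, hbad⟩ := hg
      obtain ⟨m, hm1, hmj, hcond⟩ := extract (fun v => ((g v : ℕ))) hbad
      rw [Finset.mem_biUnion]
      refine ⟨m, Finset.mem_Ico.mpr ⟨hm1, hmj⟩, ?_⟩
      simp only [hAm, Finset.mem_filter, Finset.mem_univ, true_and]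
      refine ⟨hgu, fun c hcm hlt => ?_⟩
      exact hcond c hcm (by rw [hgu]; exact hlt)
    calc (cnt r N j u : ℝ) ≤ ((∑ m ∈ Finset.Ico 1 j, (Am m).card : ℕ) : ℝ) := by
          exact_mod_cast hnat
      _ = ∑ m ∈ Finset.Ico 1 j, ((Am m).card : ℝ) := by push_cast; rfl
  -- Step B : per-m bound
  have hB : ∀ m ∈ Finset.Ico 1 j, ((Am m).card : ℝ) ≤ β ^ r * (N:ℝ)^(nsub r j) := by
    intro m hm
    obtain ⟨hm1, hmj⟩ := Finset.mem_Ico.mp hm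
    have hcount : (Am m).card = Nat.card {a : Fin N // a = u}
        * ∏ c : Chd r j, Nat.card {h : TVert r (typc c) → Fin N // Qq r j N u m c h} :=
      (nat_card_filter _).symm.trans (count_split N (fun a => a = u) (Qq r j N u m))
    have hQu : Nat.card {a : Fin N // a = u} = 1 := by
      haveI := Unique.subtypeEq u
      exact Nat.card_unique
    have hc : ∀ c : Chd r j, (Nat.card {h : TVert r (typc c) → Fin N // Qq r j N u m c h} : ℝ)
        ≤ (if typc c = m then β else 1) * (N:ℝ)^(Fintype.card (TVert r (typc c))) := by
      intro c
      by_cases hcm : typc c = m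
      · rw [if_pos hcm]
        have e : {h : TVert r (typc c) → Fin N // Qq r j N u m c h}
            ≃ {h : TVert r (typc c) → Fin N //
              (h (TRoot r (typc c))).val < u.val →
                ffColor (TGraph r (typc c)) (fun v => ((h v : ℕ))) (TRoot r (typc c)) < typc c} :=
          Equiv.subtypeEquivRight (by
            intro h
            unfold Qq
            simp [hcm])
        rw [Nat.card_congr e]
        have hIH : ∀ u' : Fin N, thr γ k N (typc c) ≤ (u'.val:ℝ) →
            (cnt r N (typc c) u' : ℝ) ≤ γ/(4*k) * (N:ℝ)^(nsub r (typc c)) :=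
          fun u' hu' => ih (typc c) (typc_lt c)
            (le_trans (le_of_lt (typc_lt c)) hjk) u' hu'
        have hcb := child_bound hk hγ0 hγ1 hN u (typc c) (typc_pos c) (typc_lt c) hIH hu
        rw [card_tvert' r (typc c), hβ]
        exact hcb
      · rw [if_neg hcm, one_mul]
        have hle : Nat.card {h : TVert r (typc c) → Fin N // Qq r j N u m c h}
            ≤ N ^ (Fintype.card (TVert r (typc c))) := by
          rw [nat_card_filter]
          calc (Finset.univ.filter (Qq r j N u m c)).card
              ≤ (Finset.univ : Finset (TVert r (typc c) → Fin N)).card :=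
                Finset.card_filter_le _ _
            _ = N ^ (Fintype.card (TVert r (typc c))) := by
                rw [Finset.card_univ, Fintype.card_fun, Fintype.card_fin]
        exact_mod_cast hle
    have hprod : (∏ c : Chd r j, (Nat.card {h : TVert r (typc c) → Fin N // Qq r j N u m c h} : ℝ))
        ≤ β ^ r * (N:ℝ)^(nsub r j) := by
      calc (∏ c : Chd r j, (Nat.card {h : TVert r (typc c) → Fin N // Qq r j N u m c h} : ℝ))
          ≤ ∏ c : Chd r j, ((if typc c = m then β else 1)
              * (N:ℝ)^(Fintype.card (TVert r (typc c)))) :=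
            Finset.prod_le_prod (fun c _ => by positivity) (fun c _ => hc c)
        _ = (∏ c : Chd r j, (if typc c = m then β else 1))
              * ∏ c : Chd r j, (N:ℝ)^(Fintype.card (TVert r (typc c))) :=
            Finset.prod_mul_distrib
        _ = β ^ r * (N:ℝ)^(nsub r j) := by
            rw [Finset.prod_ite (fun _ => β) (fun _ => (1:ℝ)), Finset.prod_const,
              Finset.prod_const_one, mul_one, chd_card r hm1 hmj,
              Finset.prod_pow_eq_pow_sum]
            rfl
    calc ((Am m).card : ℝ)
        = (∏ c : Chd r j, (Nat.card {h : TVert r (typc c) → Fin N // Qq r j N u m c h} : ℝ)) := by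
          rw [hcount, hQu, one_mul]
          push_cast
          rfl
      _ ≤ β ^ r * (N:ℝ)^(nsub r j) := hprod
  -- Step C : sum up
  have hC : ∑ m ∈ Finset.Ico 1 j, ((Am m).card : ℝ) ≤ γ/(4*k) * (N:ℝ)^(nsub r j) := by
    have hNp : (0:ℝ) ≤ (N:ℝ)^(nsub r j) := by positivity
    calc ∑ m ∈ Finset.Ico 1 j, ((Am m).card : ℝ)
        ≤ ∑ _m ∈ Finset.Ico 1 j, (β ^ r * (N:ℝ)^(nsub r j)) := Finset.sum_le_sum hB
      _ = ((j - 1 : ℕ) : ℝ) * (β ^ r * (N:ℝ)^(nsub r j)) := by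
          rw [Finset.sum_const, Nat.card_Ico, nsmul_eq_mul]
      _ ≤ (k : ℝ) * (β ^ r * (N:ℝ)^(nsub r j)) := by
          apply mul_le_mul_of_nonneg_right ?_ (by positivity)
          have : j - 1 ≤ k := le_trans (Nat.sub_le _ _) hjk
          exact_mod_cast this
      _ = ((k:ℝ) * β ^ r) * (N:ℝ)^(nsub r j) := by ring
      _ ≤ (γ/(4*k)) * (N:ℝ)^(nsub r j) := by
          apply mul_le_mul_of_nonneg_right ?_ hNp
          rw [hβ]
          exact arith_main hk hγ0 hγ1 hr
  exact le_trans hA hC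

end MainInd

section Final
open scoped Classical
set_option maxHeartbeats 1000000

lemma desc_lb : ∀ (n N : ℕ), n ≤ N →
    (N:ℝ)^n * (1 - (n:ℝ)^2/(N:ℝ)) ≤ (N.descFactorial n : ℝ) := by
  intro n
  induction n with
  | zero => intro N _; simp
  | succ n ihn =>
    intro N hn
    have hn' : n ≤ N := le_trans (Nat.le_succ n) hn
    have hNpos : (0:ℝ) < N := by
      have : 0 < N := lt_of_lt_of_le (Nat.succ_pos n) hn
      exact_mod_cast this
    have ih := ihn N hn'
    rw [Nat.descFactorial_succ, Nat.cast_mul, Nat.cast_sub hn']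
    have hfacnn : (0:ℝ) ≤ (N:ℝ) - n := by
      have : (n:ℝ) ≤ N := by exact_mod_cast hn'
      linarith
    have step1 : ((N:ℝ) - n) * ((N:ℝ)^n * (1 - (n:ℝ)^2/(N:ℝ)))
        ≤ ((N:ℝ) - n) * (N.descFactorial n : ℝ) :=
      mul_le_mul_of_nonneg_left ih hfacnn
    refine le_trans ?_ step1
    have hid : ((N:ℝ) - n) * (1 - (n:ℝ)^2/(N:ℝ))
        = (N:ℝ) - n - (n:ℝ)^2 + (n:ℝ)^3/(N:ℝ) := by
      field_simp
      ring
    have hcb : (0:ℝ) ≤ (n:ℝ)^3/(N:ℝ) := by positivity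
    have hpow : (0:ℝ) ≤ (N:ℝ)^n := by positivity
    have inner : (N:ℝ) * (1 - ((n:ℝ)+1)^2/(N:ℝ)) ≤ ((N:ℝ) - n) * (1 - (n:ℝ)^2/(N:ℝ)) := by
      have hid2 : (N:ℝ) * (1 - ((n:ℝ)+1)^2/(N:ℝ)) = (N:ℝ) - ((n:ℝ)+1)^2 := by
        field_simp
      rw [hid2, hid]
      nlinarith
    calc (N:ℝ)^(n+1) * (1 - ((n+1:ℕ):ℝ)^2/(N:ℝ))
        = (N:ℝ)^n * ((N:ℝ) * (1 - ((n:ℝ)+1)^2/(N:ℝ))) := by push_cast; ring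
      _ ≤ (N:ℝ)^n * (((N:ℝ) - n) * (1 - (n:ℝ)^2/(N:ℝ))) :=
          mul_le_mul_of_nonneg_left inner hpow
      _ = ((N:ℝ) - n) * ((N:ℝ)^n * (1 - (n:ℝ)^2/(N:ℝ))) := by ring

lemma badN_card (r i N : ℕ) :
    (Finset.univ.filter (fun f : TVert r i → Fin N =>
      ffColor (TGraph r i) (fun v => ((f v : ℕ))) (TRoot r i) < i)).card
    = ∑ u : Fin N, cnt r N i u := by
  have hsplit : Finset.univ.filter (fun f : TVert r i → Fin N =>
        ffColor (TGraph r i) (fun v => ((f v : ℕ))) (TRoot r i) < i)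
      = Finset.univ.biUnion (fun u : Fin N => Finset.univ.filter
          (fun f : TVert r i → Fin N => f (TRoot r i) = u ∧
            ffColor (TGraph r i) (fun v => ((f v : ℕ))) (TRoot r i) < i)) := by
    ext f
    simp only [Finset.mem_filter, Finset.mem_univ, true_and, Finset.mem_biUnion]
    constructor
    · intro hb; exact ⟨f (TRoot r i), rfl, hb⟩
    · rintro ⟨u, _, hb⟩; exact hb
  rw [hsplit, Finset.card_biUnion]
  · apply Finset.sum_congr rfl
    intro u _
    unfold cnt
    rw [nat_card_filter]
  · intro x _ y _ hxy
    rw [Function.onFun, Finset.disjoint_left]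
    intro f hx hy
    simp only [Finset.mem_filter, Finset.mem_univ, true_and] at hx hy
    exact hxy (hx.1 ▸ hy.1 ▸ rfl)

lemma sum_cnt_bound {k r N : ℕ} {γ : ℝ} (hk : 3 ≤ k) (hγ0 : 0 < γ) (hγ1 : γ < 1)
    (hr : 10 / γ ^ 2 * k * Real.log k ≤ (r : ℝ))
    (hN : 2 * (k:ℝ) / γ ≤ (N:ℝ))
    {i : ℕ} (hi1 : 1 ≤ i) (hik : i ≤ k) :
    ((∑ u : Fin N, cnt r N i u : ℕ) : ℝ)
      ≤ (thr γ k N i + 1 + γ/(4*k) * N) * (N:ℝ)^(nsub r i) := by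
  have hk3 : (3:ℝ) ≤ (k:ℝ) := by exact_mod_cast hk
  have hkpos : (0:ℝ) < k := by linarith
  have hNpos : (0:ℝ) < N := lt_of_lt_of_le (by positivity) hN
  have hthr0 : 0 ≤ thr γ k N i := by
    unfold thr
    have hi1' : (1:ℝ) ≤ (i:ℝ) := by exact_mod_cast hi1
    have h2M : (0:ℝ) ≤ (2*i:ℝ) - 1 := by linarith
    have h1 : 0 ≤ ((2*i:ℝ) - 1) * γ * N := by positivity
    positivity
  have hcnt_le : ∀ u : Fin N, cnt r N i u ≤ N ^ (nsub r i) := by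
    intro u
    unfold cnt
    rw [nat_card_filter]
    have hfix : (Finset.univ.filter
        (fun h : TVert r i → Fin N => h (TRoot r i) = u)).card = N ^ (nsub r i) := by
      rw [← nat_card_filter]
      exact card_root_fixed r i N u
    rw [← hfix]
    apply Finset.card_le_card
    intro f hf
    simp only [Finset.mem_filter, Finset.mem_univ, true_and] at hf ⊢
    exact hf.1
  -- split into low and high arrival values
  have hsplit := Finset.sum_filter_add_sum_filter_not Finset.univ
    (fun u : Fin N => (u.val:ℝ) < thr γ k N i) (fun u => cnt r N i u)
  set lo := Finset.univ.filter (fun u : Fin N => (u.val:ℝ) < thr γ k N i) with hlo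
  set hi' := Finset.univ.filter (fun u : Fin N => ¬ (u.val:ℝ) < thr γ k N i) with hhi
  have hlocard : (lo.card : ℝ) ≤ thr γ k N i + 1 := by
    have hsubs : lo.card ≤ (Finset.range ⌈thr γ k N i⌉₊).card := by
      apply Finset.card_le_card_of_injOn (fun u => u.val)
      · intro u hu
        simp only [hlo, Finset.mem_coe, Finset.mem_filter, Finset.mem_univ, true_and] at hu
        rw [Finset.mem_coe, Finset.mem_range]
        have : (u.val : ℝ) < (⌈thr γ k N i⌉₊ : ℝ) := lt_of_lt_of_le hu (Nat.le_ceil _)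
        exact_mod_cast this
      · intro a _ b _ hab
        exact Fin.ext hab
    rw [Finset.card_range] at hsubs
    have h1 : (lo.card : ℝ) ≤ (⌈thr γ k N i⌉₊ : ℝ) := by exact_mod_cast hsubs
    have h2 := Nat.ceil_lt_add_one hthr0
    linarith
  have hlosum : ((∑ u ∈ lo, cnt r N i u : ℕ) : ℝ)
      ≤ (thr γ k N i + 1) * (N:ℝ)^(nsub r i) := by
    have h1 : (∑ u ∈ lo, cnt r N i u) ≤ ∑ _u ∈ lo, N ^ (nsub r i) :=
      Finset.sum_le_sum (fun u _ => hcnt_le u)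
    rw [Finset.sum_const, smul_eq_mul] at h1
    have h2 : ((∑ u ∈ lo, cnt r N i u : ℕ) : ℝ) ≤ (lo.card : ℝ) * ((N:ℝ)^(nsub r i)) := by
      have := (Nat.cast_le (α := ℝ)).mpr h1
      push_cast at this
      exact_mod_cast h1
    refine le_trans h2 ?_
    apply mul_le_mul_of_nonneg_right hlocard (by positivity)
  have hhisum : ((∑ u ∈ hi', cnt r N i u : ℕ) : ℝ)
      ≤ γ/(4*k) * N * (N:ℝ)^(nsub r i) := by
    have hterm : ∀ u ∈ hi', (cnt r N i u : ℝ) ≤ γ/(4*k) * (N:ℝ)^(nsub r i) := by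
      intro u hu
      simp only [hhi, Finset.mem_filter, Finset.mem_univ, true_and, not_lt] at hu
      exact main_ind hk hγ0 hγ1 hr hN i hik u hu
    have h1 : (∑ u ∈ hi', (cnt r N i u : ℝ)) ≤ ∑ _u ∈ hi', (γ/(4*k) * (N:ℝ)^(nsub r i)) :=
      Finset.sum_le_sum hterm
    rw [Finset.sum_const, nsmul_eq_mul] at h1
    have hcard : (hi'.card : ℝ) ≤ (N : ℝ) := by
      have h0 : hi'.card ≤ (Finset.univ : Finset (Fin N)).card := Finset.card_filter_le _ _
      rw [Finset.card_univ, Fintype.card_fin] at h0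
      exact_mod_cast h0
    have h2 : ((∑ u ∈ hi', cnt r N i u : ℕ) : ℝ) = ∑ u ∈ hi', (cnt r N i u : ℝ) := by
      push_cast; rfl
    rw [h2]
    calc (∑ u ∈ hi', (cnt r N i u : ℝ)) ≤ (hi'.card : ℝ) * (γ/(4*k) * (N:ℝ)^(nsub r i)) := h1
      _ ≤ (N:ℝ) * (γ/(4*k) * (N:ℝ)^(nsub r i)) := by
          apply mul_le_mul_of_nonneg_right hcard (by positivity)
      _ = γ/(4*k) * N * (N:ℝ)^(nsub r i) := by ring
  have htotal : (∑ u : Fin N, cnt r N i u) = (∑ u ∈ lo, cnt r N i u) + (∑ u ∈ hi', cnt r N i u) := by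
    rw [hsplit]
  rw [htotal]
  push_cast
  push_cast at hlosum hhisum
  linarith

end Final


section FinalThmProof
open scoped Classical
set_option maxHeartbeats 1000000

/-- For `k ≥ 3`, `0 < γ < 1`, `r = ⌈(10/γ²)·k·ln k⌉` and `1 ≤ i ≤ k`, the probability over
a uniformly random presentation order of `T^r_i` that First-Fit assigns to the root a color
strictly smaller than `i` is at most `iγ/k`. -/
theorem tree_root_color_small_prob (k : ℕ) (hk : 3 ≤ k) (γ : ℝ) (hγ0 : 0 < γ) (hγ1 : γ < 1)
    (r : ℕ) (hr : r = ⌈10 / γ ^ 2 * k * Real.log k⌉₊)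
    (i : ℕ) (hi1 : 1 ≤ i) (hik : i ≤ k) :
    ffProb (fun ord => ffColor (TGraph r i) ord (TRoot r i) < i) ≤ i * γ / k := by
  classical
  have hk3 : (3:ℝ) ≤ (k:ℝ) := by exact_mod_cast hk
  have hkpos : (0:ℝ) < k := by linarith
  have hr' : 10 / γ ^ 2 * k * Real.log k ≤ (r:ℝ) := by rw [hr]; exact Nat.le_ceil _
  set n := Fintype.card (TVert r i) with hn
  obtain ⟨N, hNbig⟩ := exists_nat_ge ((4*(k:ℝ)*(1+(n:ℝ)^2) + 2*(k:ℝ))/γ + n)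
  have hq0 : (0:ℝ) ≤ (4*(k:ℝ)*(1+(n:ℝ)^2) + 2*k)/γ := by positivity
  have hn_le_N : (n:ℝ) ≤ N := by linarith
  have hnN : n ≤ N := by exact_mod_cast hn_le_N
  have hN2k : 2*(k:ℝ)/γ ≤ N := by
    have h1 : 2*(k:ℝ)/γ ≤ (4*(k:ℝ)*(1+(n:ℝ)^2) + 2*k)/γ := by
      gcongr
      nlinarith [sq_nonneg (n:ℝ)]
    have hn0 : (0:ℝ) ≤ n := Nat.cast_nonneg n
    linarith
  have hN4k : 4*(k:ℝ)*(1+(n:ℝ)^2)/γ ≤ N := by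
    have h1 : 4*(k:ℝ)*(1+(n:ℝ)^2)/γ ≤ (4*(k:ℝ)*(1+(n:ℝ)^2) + 2*k)/γ := by
      gcongr
      linarith
    have hn0 : (0:ℝ) ≤ n := Nat.cast_nonneg n
    linarith
  have hNpos : (0:ℝ) < N := lt_of_lt_of_le (by positivity) hN2k
  have hNpos' : 0 < N := by exact_mod_cast hNpos
  -- the bad sets
  set badN := Finset.univ.filter (fun f : TVert r i → Fin N =>
    ffColor (TGraph r i) (fun v => ((f v : ℕ))) (TRoot r i) < i) with hbadN
  unfold ffProb
  rw [Finset.filter_congr_decidable]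
  show ((Finset.univ.filter (fun e : TVert r i ≃ Fin n =>
      ffColor (TGraph r i) (fun v => ((e v : ℕ))) (TRoot r i) < i)).card : ℝ)
      / ((Nat.factorial n : ℕ) : ℝ) ≤ (i:ℝ) * γ / (k:ℝ)
  set B := Finset.univ.filter (fun e : TVert r i ≃ Fin n =>
    ffColor (TGraph r i) (fun v => ((e v : ℕ))) (TRoot r i) < i) with hB
  -- bridge : B.card * choose N n ≤ badN.card
  have hbridge : B.card * N.choose n ≤ badN.card := by
    have hchoose : (Finset.powersetCard n (Finset.univ : Finset (Fin N))).card = N.choose n := by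
      rw [Finset.card_powersetCard, Finset.card_univ, Fintype.card_fin]
    rw [← hchoose, ← Finset.card_product]
    apply Finset.card_le_card_of_injOn
      (fun p : (TVert r i ≃ Fin n) × Finset (Fin N) =>
        if h : p.2.card = n then (fun v => p.2.orderEmbOfFin h (p.1 v))
        else (fun _ => (⟨0, hNpos'⟩ : Fin N)))
    · rintro ⟨e, T⟩ hp
      rw [Finset.mem_coe, Finset.mem_product] at hp
      obtain ⟨heB, hT⟩ := hp
      have hTcard : T.card = n := (Finset.mem_powersetCard.mp hT).2
      simp only [dif_pos hTcard]
      simp only [hbadN, Finset.mem_coe, Finset.mem_filter, Finset.mem_univ, true_and]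
      have hord : ∀ a b : TVert r i,
          ((e a : ℕ)) < ((e b : ℕ)) ↔
          ((T.orderEmbOfFin hTcard (e a) : Fin N) : ℕ) < ((T.orderEmbOfFin hTcard (e b) : Fin N) : ℕ) := by
        intro a b
        rw [← Fin.lt_def, ← Fin.lt_def]
        exact (OrderEmbedding.lt_iff_lt _).symm
      have htrans := ffColor_transfer (TGraph r i) (TGraph r i)
        (fun v => ((T.orderEmbOfFin hTcard (e v) : Fin N) : ℕ))
        (fun v => ((e v : ℕ)))
        id (fun a b => Iff.rfl) hord (fun a u _ _ => ⟨u, rfl⟩) (TRoot r i)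
      rw [show ffColor (TGraph r i)
          (fun v => ((T.orderEmbOfFin hTcard (e v) : Fin N) : ℕ)) (TRoot r i)
          = ffColor (TGraph r i) (fun v => ((e v : ℕ))) (TRoot r i) from htrans]
      simp only [hB, Finset.mem_filter, Finset.mem_univ, true_and] at heB
      exact heB
    · rintro ⟨e, T⟩ hp ⟨e', T'⟩ hp' heq
      simp only [Finset.mem_coe, Finset.mem_product] at hp hp'
      have hTcard : T.card = n := (Finset.mem_powersetCard.mp hp.2).2
      have hTcard' : T'.card = n := (Finset.mem_powersetCard.mp hp'.2).2
      simp only [dif_pos hTcard, dif_pos hTcard'] at heq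
      have hTT : T = T' := by
        ext x
        have hr1 : x ∈ T ↔ ∃ v, T.orderEmbOfFin hTcard (e v) = x := by
          constructor
          · intro hx
            have hx' : x ∈ Set.range (T.orderEmbOfFin hTcard) := by
              rw [Finset.range_orderEmbOfFin]; exact hx
            obtain ⟨a, ha⟩ := hx'
            exact ⟨e.symm a, by rw [Equiv.apply_symm_apply]; exact ha⟩
          · rintro ⟨v, rfl⟩
            have : T.orderEmbOfFin hTcard (e v) ∈ Set.range (T.orderEmbOfFin hTcard) := ⟨_, rfl⟩
            rwa [Finset.range_orderEmbOfFin] at this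
        have hr2 : x ∈ T' ↔ ∃ v, T'.orderEmbOfFin hTcard' (e' v) = x := by
          constructor
          · intro hx
            have hx' : x ∈ Set.range (T'.orderEmbOfFin hTcard') := by
              rw [Finset.range_orderEmbOfFin]; exact hx
            obtain ⟨a, ha⟩ := hx'
            exact ⟨e'.symm a, by rw [Equiv.apply_symm_apply]; exact ha⟩
          · rintro ⟨v, rfl⟩
            have : T'.orderEmbOfFin hTcard' (e' v) ∈ Set.range (T'.orderEmbOfFin hTcard') := ⟨_, rfl⟩
            rwa [Finset.range_orderEmbOfFin] at this
        rw [hr1, hr2]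
        constructor
        · rintro ⟨v, hv⟩
          exact ⟨v, by rw [← congrFun heq v]; exact hv⟩
        · rintro ⟨v, hv⟩
          exact ⟨v, by rw [congrFun heq v]; exact hv⟩
      subst hTT
      have hee : e = e' := by
        apply Equiv.ext
        intro v
        exact (T.orderEmbOfFin hTcard).injective (congrFun heq v)
      rw [hee]
  -- counting bound on badN
  have hbadNbound : (badN.card : ℝ)
      ≤ (thr γ k N i + 1 + γ/(4*k) * N) * (N:ℝ)^(nsub r i) := by
    have h1 : badN.card = ∑ u : Fin N, cnt r N i u := badN_card r i N
    rw [h1]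
    exact sum_cnt_bound hk hγ0 hγ1 hr' hN2k hi1 hik
  -- arithmetic
  have hfacpos : (0:ℝ) < ((Nat.factorial n) : ℝ) := by exact_mod_cast Nat.factorial_pos n
  have hchoosepos : (0:ℝ) < (N.choose n : ℝ) := by exact_mod_cast Nat.choose_pos hnN
  have hcard : n = nsub r i + 1 := card_tvert' r i
  have hn2 : (n:ℝ)^2 < N := by
    have hx : (0:ℝ) ≤ 4*(k:ℝ)*(1+(n:ℝ)^2) := by positivity
    have h1 : 4*(k:ℝ)*(1+(n:ℝ)^2) ≤ 4*(k:ℝ)*(1+(n:ℝ)^2)/γ := by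
      rw [le_div_iff₀ hγ0]
      nlinarith [mul_le_mul_of_nonneg_left (le_of_lt hγ1) hx]
    nlinarith [sq_nonneg (n:ℝ)]
  have hiγ : (i:ℝ)*γ ≤ k := by
    have hik' : (i:ℝ) ≤ k := by exact_mod_cast hik
    nlinarith [Nat.cast_nonneg (α := ℝ) i]
  have hiγ0 : (0:ℝ) ≤ (i:ℝ)*γ/k := by positivity
  rw [div_le_iff₀ hfacpos]
  have hkey1 : (B.card : ℝ) * (N.choose n : ℝ) ≤ (badN.card : ℝ) := by exact_mod_cast hbridge
  have hdesc_eq : ((N.descFactorial n : ℕ) : ℝ)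
      = ((Nat.factorial n : ℕ) : ℝ) * (N.choose n : ℝ) := by
    exact_mod_cast Nat.descFactorial_eq_factorial_mul_choose N n
  have hdesc_lb := desc_lb n N hnN
  have hinner : thr γ k N i + 1 + γ/(4*k) * N ≤ ((i:ℝ)*γ/k) * ((N:ℝ) - (n:ℝ)^2) := by
    have hN4k' : 4*(k:ℝ)*(1+(n:ℝ)^2) ≤ γ * N := by
      rw [div_le_iff₀ hγ0] at hN4k
      linarith
    have h2 : 1 + (n:ℝ)^2 ≤ γ*(N:ℝ)/(4*k) := by
      rw [le_div_iff₀ (by positivity)]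
      nlinarith
    have h3 : (i:ℝ)*γ*(n:ℝ)^2/k ≤ (n:ℝ)^2 := by
      rw [div_le_iff₀ hkpos]
      nlinarith [sq_nonneg (n:ℝ)]
    have expand : ((i:ℝ)*γ/k) * ((N:ℝ) - (n:ℝ)^2)
        - ((2*(i:ℝ)-1)*γ*(N:ℝ)/(2*k) + 1 + γ/(4*k)*N)
        = γ*(N:ℝ)/(4*k) - 1 - (i:ℝ)*γ*(n:ℝ)^2/k := by
      field_simp
      ring
    unfold thr
    push_cast
    linarith [h2, h3, expand]
  have hfinal : (badN.card : ℝ)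
      ≤ ((i:ℝ)*γ/k) * (((Nat.factorial n) : ℝ) * (N.choose n : ℝ)) := by
    rw [← hdesc_eq]
    have hP : (0:ℝ) ≤ (N:ℝ)^(nsub r i) := by positivity
    have step2 : (thr γ k N i + 1 + γ/(4*k) * N) * (N:ℝ)^(nsub r i)
        ≤ (((i:ℝ)*γ/k) * ((N:ℝ) - (n:ℝ)^2)) * (N:ℝ)^(nsub r i) :=
      mul_le_mul_of_nonneg_right hinner hP
    have hident : (((i:ℝ)*γ/k) * ((N:ℝ) - (n:ℝ)^2)) * (N:ℝ)^(nsub r i)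
        = ((i:ℝ)*γ/k) * ((N:ℝ)^n * (1 - (n:ℝ)^2/(N:ℝ))) := by
      rw [hcard, pow_succ]
      field_simp
      ring
    have step3 : ((i:ℝ)*γ/k) * ((N:ℝ)^n * (1 - (n:ℝ)^2/(N:ℝ)))
        ≤ ((i:ℝ)*γ/k) * ((N.descFactorial n : ℕ) : ℝ) :=
      mul_le_mul_of_nonneg_left hdesc_lb hiγ0
    calc (badN.card:ℝ) ≤ (thr γ k N i + 1 + γ/(4*k) * N) * (N:ℝ)^(nsub r i) := hbadNbound
      _ ≤ (((i:ℝ)*γ/k) * ((N:ℝ) - (n:ℝ)^2)) * (N:ℝ)^(nsub r i) := step2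
      _ = ((i:ℝ)*γ/k) * ((N:ℝ)^n * (1 - (n:ℝ)^2/(N:ℝ))) := hident
      _ ≤ ((i:ℝ)*γ/k) * ((N.descFactorial n : ℕ) : ℝ) := step3
  have hlast : (B.card : ℝ) * (N.choose n : ℝ)
      ≤ ((i:ℝ)*γ/k * ((Nat.factorial n) : ℝ)) * (N.choose n : ℝ) := by
    calc (B.card:ℝ)*(N.choose n:ℝ) ≤ (badN.card:ℝ) := hkey1
      _ ≤ ((i:ℝ)*γ/k) * (((Nat.factorial n):ℝ) * (N.choose n:ℝ)) := hfinal
      _ = ((i:ℝ)*γ/k * ((Nat.factorial n):ℝ)) * (N.choose n:ℝ) := by ring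
  exact le_of_mul_le_mul_right hlast hchoosepos

end FinalThmProof
end AuxProof
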